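/- Let (E, ℰ) be a measurable space, ν a probability measure on E, and P a Markov kernel on E leaving ν invariant (i.e. ∫ P f dν = ∫ f dν for bounded measurable f ≥ 0, extended to nonnegative measurable f by monotone convergence). Let V : E → [0,∞) be measurable, λ > 0, and suppose there are constants r ∈ (0,1), p > 1 with p·r < 1, and C ≥ 0 such that for every x ∈ E, ∫_E exp(λ V(y)) P(x, dy) ≤ (1/p) exp(λ p r V(x)) + C. Then ∫_E exp(λ V(x)) ν(dx) ≤ p C / (p − 1) < ∞. -/

import Mathlib

/-!
Because `l V ≥ 0` and `p r < 1`, `exp (l p r V) ≤ W := exp (l V)`, so the drift condition becomes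
the linear one `P W ≤ c W + C` with `c = 1 / p < 1`. The one-step consequence `ν W ≤ c ν W + C`
is useless until `ν W < ∞` is known, so one works with truncations instead: integrating against
the invariant measure `n` times gives `ν (min W N) ≤ ν (min (cⁿ W + C (1 + c + ⋯ + cⁿ⁻¹)) N)`,
and letting `n → ∞` (dominated convergence), then `N → ∞` (monotone convergence), yields
`ν W ≤ C / (1 - c) = p C / (p - 1)`.
-/

open MeasureTheory ProbabilityTheory ENNReal Filter Topology

section Drift

variable {E : Type*} [MeasurableSpace E] {ν : Measure E}
  {P : Kernel E E} [IsMarkovKernel P] {W : E → ℝ≥0∞} {c K : ℝ≥0∞}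

lemma lintegral_min_le_min_lintegral {μ : Measure E} [IsProbabilityMeasure μ] (f : E → ℝ≥0∞)
    (N : ℝ≥0∞) : ∫⁻ x, min (f x) N ∂μ ≤ min (∫⁻ x, f x ∂μ) N :=
  le_min (lintegral_mono fun _ ↦ min_le_left _ _)
    ((lintegral_mono fun _ ↦ min_le_right _ _).trans_eq (by simp))

lemma lintegral_min_affine_le_of_drift [IsProbabilityMeasure ν]
    (hν : ∀ f : E → ℝ≥0∞, Measurable f → ∫⁻ x, ∫⁻ y, f y ∂(P x) ∂ν = ∫⁻ x, f x ∂ν)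
    (hW : Measurable W) (hdrift : ∀ x, ∫⁻ y, W y ∂(P x) ≤ c * W x + K) (a b N : ℝ≥0∞) :
    ∫⁻ x, min (a * W x + b) N ∂ν ≤ ∫⁻ x, min (a * c * W x + (a * K + b)) N ∂ν := by
  rw [← hν _ (((hW.const_mul a).add_const b).min measurable_const)]
  refine lintegral_mono fun x ↦ (lintegral_min_le_min_lintegral _ N).trans (min_le_min_right N ?_)
  calc ∫⁻ y, a * W y + b ∂(P x) = a * ∫⁻ y, W y ∂(P x) + b := by
        rw [lintegral_add_right _ measurable_const, lintegral_const_mul _ hW]; simp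
    _ ≤ a * (c * W x + K) + b := by gcongr; exact hdrift x
    _ = a * c * W x + (a * K + b) := by ring

lemma lintegral_min_le_of_drift_iterate [IsProbabilityMeasure ν]
    (hν : ∀ f : E → ℝ≥0∞, Measurable f → ∫⁻ x, ∫⁻ y, f y ∂(P x) ∂ν = ∫⁻ x, f x ∂ν)
    (hW : Measurable W) (hdrift : ∀ x, ∫⁻ y, W y ∂(P x) ≤ c * W x + K) (N : ℝ≥0∞) (n : ℕ) :
    ∫⁻ x, min (W x) N ∂ν ≤
      ∫⁻ x, min (c ^ n * W x + K * ∑ i ∈ Finset.range n, c ^ i) N ∂ν := by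
  induction n with
  | zero => simp
  | succ n ih =>
    refine ih.trans ((lintegral_min_affine_le_of_drift hν hW hdrift _ _ N).trans_eq ?_)
    simp only [pow_succ, Finset.sum_range_succ]
    ring_nf

lemma tendsto_lintegral_min_geometric [IsFiniteMeasure ν] (hW_top : ∀ x, W x ≠ ∞)
    (hW : Measurable W) (hc : c < 1) (B : ℝ≥0∞) {N : ℝ≥0∞} (hN : N ≠ ∞) :
    Tendsto (fun n : ℕ ↦ ∫⁻ x, min (c ^ n * W x + B) N ∂ν) atTop (𝓝 (min B N * ν .univ)) := by
  have hlim : ∀ x, Tendsto (fun n : ℕ ↦ min (c ^ n * W x + B) N) atTop (𝓝 (min B N)) := by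
    intro x
    have h := (ENNReal.Tendsto.mul_const (ENNReal.tendsto_pow_atTop_nhds_zero_of_lt_one hc)
      (Or.inr (hW_top x))).add_const B
    simpa using h.min tendsto_const_nhds
  simpa using tendsto_lintegral_of_dominated_convergence (μ := ν) (fun _ ↦ N)
    (fun n ↦ ((hW.const_mul _).add_const B).min measurable_const)
    (fun n ↦ ae_of_all _ fun x ↦ min_le_right _ _)
    (by simpa using ENNReal.mul_ne_top hN (measure_ne_top ν _)) (ae_of_all _ hlim)

theorem lintegral_le_of_drift [IsProbabilityMeasure ν]
    (hν : ∀ f : E → ℝ≥0∞, Measurable f → ∫⁻ x, ∫⁻ y, f y ∂(P x) ∂ν = ∫⁻ x, f x ∂ν)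
    (hW : Measurable W) (hW_top : ∀ x, W x ≠ ∞) (hc : c < 1)
    (hdrift : ∀ x, ∫⁻ y, W y ∂(P x) ≤ c * W x + K) :
    ∫⁻ x, W x ∂ν ≤ K * (1 - c)⁻¹ := by
  have hgeom (n : ℕ) : ∑ i ∈ Finset.range n, c ^ i ≤ (1 - c)⁻¹ :=
    ENNReal.tsum_geometric c ▸ ENNReal.sum_le_tsum _
  have htrunc (N : ℕ) : ∫⁻ x, min (W x) N ∂ν ≤ K * (1 - c)⁻¹ := by
    have hlim := tendsto_lintegral_min_geometric (ν := ν) hW_top hW hc (K * (1 - c)⁻¹)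
      (natCast_ne_top N)
    rw [measure_univ, mul_one] at hlim
    refine (ge_of_tendsto' hlim fun n ↦ ?_).trans (min_le_left _ _)
    exact (lintegral_min_le_of_drift_iterate hν hW hdrift N n).trans (by gcongr; exact hgeom n)
  calc ∫⁻ x, W x ∂ν = ∫⁻ x, ⨆ N : ℕ, min (W x) N ∂ν := by
        simp_rw [← inf_iSup_eq, iSup_natCast, inf_top_eq]
    _ = ⨆ N : ℕ, ∫⁻ x, min (W x) N ∂ν :=
        lintegral_iSup (fun N ↦ hW.min measurable_const)
          fun _ _ h x ↦ min_le_min_left _ (Nat.cast_le.mpr h)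
    _ ≤ K * (1 - c)⁻¹ := iSup_le htrunc

end Drift

theorem stmt12_general {E : Type*} [MeasurableSpace E] (ν : Measure E) [IsProbabilityMeasure ν]
    (P : Kernel E E) [IsMarkovKernel P]
    (hinv : ∀ f : E → ℝ≥0∞, Measurable f →
      ∫⁻ x, ∫⁻ y, f y ∂(P x) ∂ν = ∫⁻ x, f x ∂ν)
    (V : E → ℝ) (hV : Measurable V) (hV0 : ∀ x, 0 ≤ V x)
    (l r p C : ℝ) (hl : 0 < l) (hp : 1 < p)
    (hpr : p * r < 1)
    (hdrift : ∀ x, ∫⁻ y, ENNReal.ofReal (Real.exp (l * V y)) ∂(P x) ≤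
      ENNReal.ofReal ((1/p) * Real.exp (l * p * r * V x) + C)) :
    ∫⁻ x, ENNReal.ofReal (Real.exp (l * V x)) ∂ν ≤ ENNReal.ofReal (p * C / (p - 1)) ∧
    ∫⁻ x, ENNReal.ofReal (Real.exp (l * V x)) ∂ν < ⊤ := by
  have hp0 : 0 < p := by linarith
  have hp_inv : 0 < 1 / p := one_div_pos.2 hp0
  have hc : ENNReal.ofReal (1 / p) < 1 := ofReal_lt_one.2 ((div_lt_one hp0).2 hp)
  have hlinear (x : E) : ∫⁻ y, ENNReal.ofReal (Real.exp (l * V y)) ∂(P x) ≤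
      ENNReal.ofReal (1 / p) * ENNReal.ofReal (Real.exp (l * V x)) + ENNReal.ofReal C := by
    have hexp : Real.exp (l * p * r * V x) ≤ Real.exp (l * V x) :=
      Real.exp_le_exp.2 (by nlinarith [mul_nonneg hl.le (hV0 x)])
    calc _ ≤ ENNReal.ofReal ((1 / p) * Real.exp (l * p * r * V x) + C) := hdrift x
      _ ≤ ENNReal.ofReal ((1 / p) * Real.exp (l * V x) + C) := by gcongr
      _ ≤ _ := by rw [← ofReal_mul hp_inv.le]; exact ofReal_add_le
  have hbound := lintegral_le_of_drift hinv
    (Real.measurable_exp.comp (hV.const_mul l)).ennreal_ofReal (fun _ ↦ ofReal_ne_top) hc hlinear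
  have hconst : ENNReal.ofReal C * (1 - ENNReal.ofReal (1 / p))⁻¹ =
      ENNReal.ofReal (p * C / (p - 1)) := by
    have hq : 0 < 1 - 1 / p := sub_pos.2 ((div_lt_one hp0).2 hp)
    rw [← ofReal_one, ← ofReal_sub _ hp_inv.le, ← ofReal_inv_of_pos hq,
      ← ofReal_mul' (inv_pos.2 hq).le]
    congr 1
    field_simp
  exact ⟨hbound.trans_eq hconst, hbound.trans_lt (hconst ▸ ofReal_lt_top)⟩

theorem stmt12 {E : Type*} [MeasurableSpace E] (ν : Measure E) [IsProbabilityMeasure ν]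
    (P : Kernel E E) [IsMarkovKernel P]
    (hinv : ∀ f : E → ℝ≥0∞, Measurable f →
      ∫⁻ x, ∫⁻ y, f y ∂(P x) ∂ν = ∫⁻ x, f x ∂ν)
    (V : E → ℝ) (hV : Measurable V) (hV0 : ∀ x, 0 ≤ V x)
    (l r p C : ℝ) (hl : 0 < l) (hr : r ∈ Set.Ioo (0:ℝ) 1) (hp : 1 < p)
    (hpr : p * r < 1) (hC : 0 ≤ C)
    (hdrift : ∀ x, ∫⁻ y, ENNReal.ofReal (Real.exp (l * V y)) ∂(P x) ≤
      ENNReal.ofReal ((1/p) * Real.exp (l * p * r * V x) + C)) :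
    ∫⁻ x, ENNReal.ofReal (Real.exp (l * V x)) ∂ν ≤ ENNReal.ofReal (p * C / (p - 1)) ∧
    ∫⁻ x, ENNReal.ofReal (Real.exp (l * V x)) ∂ν < ⊤ :=
  stmt12_general ν P hinv V hV hV0 l r p C hl hp hpr hdrift
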